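/- If p is a homogeneous H-stable polynomial of degree n in m variables and X is a point with all positive coordinates, then every coefficient of p/p(X) is a nonnegative real number. -/

import Mathlib

/-!
Restrict `p` to a line `t ↦ z + t • Y` with `Y` positive. Since `p` is H-stable, every root of
the restriction lies in the open left half-plane; if moreover `z = X` is real and positive, every
root `r` is a negative real, for otherwise some `u` with `u` and `u * r` in the right half-plane
would make `u • (X + r • Y)` a zero of `p` in the right half-plane, by homogeneity. By
Gauss–Lucas the directional derivative `∂_Y p` is again H-stable, and the logarithmic derivative
`∂_Y p (X) / p (X) = ∑ 1 / (-r)` is a nonnegative real. Induction on the degree, differentiating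
along `e_i + ε` and letting `ε → 0`, then shows `coeff d p / p X ≥ 0`, where `≥` is the partial
order on `ℂ` in which `0 ≤ z` means that `z` is a nonnegative real.
-/

open Filter Topology
open scoped ComplexOrder

theorem Complex.exists_re_pos_and_re_mul_pos {r : ℂ} (hr : r.im ≠ 0) :
    ∃ u : ℂ, 0 < u.re ∧ 0 < (u * r).re := by
  -- `u = ‖r‖ + conj r` has argument `-arg r / 2`, so `u` and `u * r` lie within `π / 2` of `1`
  have hlt := abs_lt.mp (Complex.abs_re_lt_norm.mpr hr)
  refine ⟨‖r‖ + (starRingEnd ℂ) r, ?_, ?_⟩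
  · rw [Complex.add_re, Complex.ofReal_re, Complex.conj_re]
    linarith
  rw [add_mul, Complex.conj_mul']
  simp only [Complex.add_re, Complex.re_ofReal_mul]
  norm_cast
  nlinarith [norm_nonneg r]

theorem Complex.nonneg_of_forall_pos_nonneg_add_mul {a b : ℂ}
    (h : ∀ ε : ℝ, 0 < ε → 0 ≤ a + ε * b) : 0 ≤ a := by
  have hlim : Tendsto (fun ε : ℝ => a + ε * b) (𝓝[>] 0) (𝓝 a) := by
    have : Continuous fun ε : ℝ => a + ε * b := by fun_prop
    simpa using (this.tendsto 0).mono_left nhdsWithin_le_nhds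
  exact ge_of_tendsto hlim (eventually_nhdsWithin_of_forall h)

namespace Polynomial

theorem coeff_prod_pow_of_natDegree_le_one {ι R : Type*} [CommSemiring R]
    (s : Finset ι) (f : ι → R[X]) (k : ι → ℕ) (hf : ∀ i ∈ s, (f i).natDegree ≤ 1) :
    (∏ i ∈ s, f i ^ k i).coeff (∑ i ∈ s, k i) = ∏ i ∈ s, (f i).coeff 1 ^ k i := by
  classical
  induction s using Finset.induction_on with
  | empty => simp
  | insert a s ha ih =>
    have hs : ∀ i ∈ s, (f i).natDegree ≤ 1 := fun i hi => hf i (Finset.mem_insert_of_mem hi)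
    have ha1 := hf a (Finset.mem_insert_self a s)
    have hdeg : (∏ i ∈ s, f i ^ k i).natDegree ≤ ∑ i ∈ s, k i :=
      (natDegree_prod_le _ _).trans <| Finset.sum_le_sum fun i hi =>
        (natDegree_pow_le_of_le _ (hs i hi)).trans (mul_one _).le
    have hpow := coeff_pow_of_natDegree_le (m := k a) ha1
    rw [mul_one] at hpow
    rw [Finset.prod_insert ha, Finset.sum_insert ha, Finset.prod_insert ha,
      coeff_mul_add_eq_of_natDegree_le _ hdeg, ih hs, hpow]
    simpa using natDegree_pow_le_of_le (k a) ha1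

theorem eval_derivative_ne_zero_of_re_lt {f : ℂ[X]} (hf : 0 < f.degree) {w : ℂ}
    (h : ∀ r ∈ f.roots, r.re < w.re) : f.derivative.eval w ≠ 0 := by
  intro hw
  have hf' : derivative f ≠ 0 := by
    rw [Ne, derivative_eq_zero]
    exact (natDegree_pos_iff_degree_pos.mpr hf).ne'
  have hsub : convexHull ℝ (f.rootSet ℂ) ⊆ {c : ℂ | c.re < w.re} := by
    refine convexHull_min (fun r hr => h r ?_) (convex_halfSpace_re_lt _)
    obtain ⟨hf0, hr⟩ := mem_rootSet.mp hr
    exact mem_roots'.mpr ⟨hf0, by simpa using hr⟩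
  have hw' := hsub <| rootSet_derivative_subset_convexHull_rootSet hf
    (mem_rootSet.mpr ⟨hf', by simpa using hw⟩)
  exact lt_irrefl w.re hw'

theorem eval_derivative_div_eval_nonneg {f : ℂ[X]} {w : ℂ} (hw : f.eval w ≠ 0)
    (h : ∀ r ∈ f.roots, r < w) : 0 ≤ f.derivative.eval w / f.eval w := by
  rw [(IsAlgClosed.splits f).eval_derivative_div_eval_of_ne_zero hw]
  refine Multiset.sum_nonneg fun x hx => ?_
  obtain ⟨r, hr, rfl⟩ := Multiset.mem_map.mp hx
  exact (one_div_pos.mpr (sub_pos.mpr (h r hr))).le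

end Polynomial

namespace MvPolynomial

variable {σ : Type*}

theorem IsHomogeneous.degree_eq {R : Type*} [CommSemiring R] {p : MvPolynomial σ R} {n : ℕ}
    (hp : p.IsHomogeneous n) {d : σ →₀ ℕ} (hd : p.coeff d ≠ 0) : d.degree = n := by
  rw [Finsupp.degree_eq_weight_one]
  exact hp hd

theorem IsHomogeneous.eval_smul {R : Type*} [CommSemiring R] {p : MvPolynomial σ R} {n : ℕ}
    (hp : p.IsHomogeneous n) (c : R) (w : σ → R) :
    eval (c • w) p = c ^ n * eval w p := by
  simp only [eval_eq, Finset.mul_sum, Pi.smul_apply, smul_eq_mul, mul_pow,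
    Finset.prod_mul_distrib, Finset.prod_pow_eq_pow_sum]
  refine Finset.sum_congr rfl fun d hd => ?_
  rw [← Finsupp.degree_apply, hp.degree_eq (mem_support_iff.mp hd)]
  ring

def IsHStable (p : MvPolynomial σ ℂ) : Prop :=
  ∀ z : σ → ℂ, (∀ i, 0 < (z i).re) → eval z p ≠ 0

noncomputable def lineRestrict (z : σ → ℂ) (Y : σ → ℝ) : MvPolynomial σ ℂ →ₐ[ℂ] Polynomial ℂ :=
  aeval fun i => Polynomial.C (z i) + Polynomial.C (Y i : ℂ) * Polynomial.X

theorem lineRestrict_X (z : σ → ℂ) (Y : σ → ℝ) (i : σ) :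
    lineRestrict z Y (X i) = Polynomial.C (z i) + Polynomial.C (Y i : ℂ) * Polynomial.X :=
  aeval_X _ i

theorem eval_lineRestrict (z : σ → ℂ) (Y : σ → ℝ) (p : MvPolynomial σ ℂ) (t : ℂ) :
    (lineRestrict z Y p).eval t = eval (fun i => z i + Y i * t) p := by
  induction p using MvPolynomial.induction_on with
  | C a => simp [lineRestrict]
  | add p q hp hq => simp [hp, hq]
  | mul_X p i hp => simp [hp, lineRestrict_X]

theorem eval_lineRestrict_zero (z : σ → ℂ) (Y : σ → ℝ) (p : MvPolynomial σ ℂ) :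
    (lineRestrict z Y p).eval 0 = eval z p := by
  simp [eval_lineRestrict]

theorem IsHomogeneous.coeff_lineRestrict {p : MvPolynomial σ ℂ} {n : ℕ} (hp : p.IsHomogeneous n)
    (z : σ → ℂ) (Y : σ → ℝ) : (lineRestrict z Y p).coeff n = eval (fun i => (Y i : ℂ)) p := by
  rw [p.as_sum, map_sum, Polynomial.finsetSum_coeff, map_sum]
  refine Finset.sum_congr rfl fun d hd => ?_
  rw [lineRestrict, aeval_monomial, eval_monomial, Polynomial.algebraMap_eq, Polynomial.coeff_C_mul,
    Finsupp.prod, Finsupp.prod, ← hp.degree_eq (mem_support_iff.mp hd), Finsupp.degree_apply,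
    Polynomial.coeff_prod_pow_of_natDegree_le_one]
  · simp
  · intro i _
    compute_degree!

theorem IsHStable.re_neg_of_mem_roots_lineRestrict {p : MvPolynomial σ ℂ} (hp : IsHStable p)
    {z : σ → ℂ} (hz : ∀ i, 0 < (z i).re) {Y : σ → ℝ} (hY : ∀ i, 0 ≤ Y i) {r : ℂ}
    (hr : r ∈ (lineRestrict z Y p).roots) : r.re < 0 := by
  by_contra! h
  refine hp (fun i => z i + Y i * r) (fun i => ?_) ?_
  · simpa using add_pos_of_pos_of_nonneg (hz i) (mul_nonneg (hY i) h)
  · rw [← eval_lineRestrict]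
    exact (Polynomial.mem_roots'.mp hr).2

theorem IsHStable.neg_of_mem_roots_lineRestrict {p : MvPolynomial σ ℂ} {n : ℕ}
    (hh : p.IsHomogeneous n) (hp : IsHStable p) {X : σ → ℝ} (hX : ∀ i, 0 < X i) {Y : σ → ℝ}
    (hY : ∀ i, 0 ≤ Y i) {r : ℂ} (hr : r ∈ (lineRestrict (fun i => (X i : ℂ)) Y p).roots) :
    r < 0 := by
  have hroot := (Polynomial.mem_roots'.mp hr).2.eq_zero
  rw [eval_lineRestrict] at hroot
  refine Complex.lt_def.mpr ⟨hp.re_neg_of_mem_roots_lineRestrict (by simpa using hX) hY hr, ?_⟩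
  by_contra him
  obtain ⟨u, hu, hur⟩ := Complex.exists_re_pos_and_re_mul_pos him
  refine hp (u • fun i => (X i : ℂ) + Y i * r) (fun i => ?_) (by rw [hh.eval_smul, hroot, mul_zero])
  have : (u * (X i + Y i * r)).re = u.re * X i + Y i * (u * r).re := by
    rw [mul_add, Complex.add_re, mul_left_comm, Complex.re_ofReal_mul, Complex.re_mul_ofReal]
  simpa [this] using add_pos_of_pos_of_nonneg (mul_pos hu (hX i)) (mul_nonneg (hY i) hur.le)

section Fintype

variable [Fintype σ]

noncomputable def dirDeriv (Y : σ → ℝ) : Derivation ℂ (MvPolynomial σ ℂ) (MvPolynomial σ ℂ) :=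
  ∑ i, (Y i : ℂ) • pderiv i

theorem dirDeriv_apply (Y : σ → ℝ) (p : MvPolynomial σ ℂ) :
    dirDeriv Y p = ∑ i, C (Y i : ℂ) * pderiv i p := by
  rw [dirDeriv, ← Derivation.coeFnAddMonoidHom_apply, map_sum]
  simp only [Finset.sum_apply, Derivation.coeFnAddMonoidHom_apply, Derivation.smul_apply,
    smul_eq_C_mul]

theorem dirDeriv_X (Y : σ → ℝ) (i : σ) : dirDeriv Y (X i) = C (Y i : ℂ) := by
  classical
  simp [dirDeriv_apply, pderiv_X, Pi.single_apply]

theorem coeff_dirDeriv (Y : σ → ℝ) (p : MvPolynomial σ ℂ) (d : σ →₀ ℕ) :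
    (dirDeriv Y p).coeff d = ∑ i, (Y i : ℂ) * (pderiv i p).coeff d := by
  simp [dirDeriv_apply, coeff_sum]

theorem derivative_lineRestrict (z : σ → ℂ) (Y : σ → ℝ) (p : MvPolynomial σ ℂ) :
    Polynomial.derivative (lineRestrict z Y p) = lineRestrict z Y (dirDeriv Y p) := by
  induction p using MvPolynomial.induction_on with
  | C a => simp [lineRestrict]
  | add p q hp hq => simp [hp, hq]
  | mul_X p i hp =>
    simp only [map_mul, Derivation.leibniz, smul_eq_mul, map_add, lineRestrict_X, dirDeriv_X,
      Polynomial.derivative_mul, Polynomial.derivative_C, Polynomial.derivative_X, algHom_C,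
      Polynomial.algebraMap_eq, hp]
    ring

theorem eval_dirDeriv (z : σ → ℂ) (Y : σ → ℝ) (p : MvPolynomial σ ℂ) :
    eval z (dirDeriv Y p) = (Polynomial.derivative (lineRestrict z Y p)).eval 0 := by
  rw [derivative_lineRestrict, eval_lineRestrict_zero]

theorem IsHomogeneous.dirDeriv {p : MvPolynomial σ ℂ} {n : ℕ} (hh : p.IsHomogeneous (n + 1))
    (Y : σ → ℝ) : (dirDeriv Y p).IsHomogeneous n := by
  intro d hd
  rw [coeff_dirDeriv] at hd
  obtain ⟨i, -, hi⟩ := Finset.exists_ne_zero_of_sum_ne_zero hd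
  rw [coeff_pderiv] at hi
  have := hh.degree_eq (left_ne_zero_of_mul (right_ne_zero_of_mul hi))
  rw [map_add, Finsupp.degree_single, Finsupp.degree_eq_weight_one] at this
  exact Nat.add_right_cancel this

theorem isHStable_dirDeriv {p : MvPolynomial σ ℂ} {n : ℕ} (hh : p.IsHomogeneous (n + 1))
    (hp : IsHStable p) {Y : σ → ℝ} (hY : ∀ i, 0 < Y i) : IsHStable (dirDeriv Y p) := by
  intro z hz
  have htop : (lineRestrict z Y p).coeff (n + 1) ≠ 0 := by
    rw [hh.coeff_lineRestrict]
    exact hp _ (by simpa using hY)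
  rw [eval_dirDeriv]
  refine Polynomial.eval_derivative_ne_zero_of_re_lt ?_ fun r hr => ?_
  · exact (WithBot.coe_lt_coe.mpr n.succ_pos).trans_le (Polynomial.le_degree_of_ne_zero htop)
  · simpa using hp.re_neg_of_mem_roots_lineRestrict hz (fun i => (hY i).le) hr

theorem IsHStable.eval_dirDeriv_div_nonneg {p : MvPolynomial σ ℂ} {n : ℕ}
    (hh : p.IsHomogeneous n) (hp : IsHStable p) {X : σ → ℝ} (hX : ∀ i, 0 < X i) {Y : σ → ℝ}
    (hY : ∀ i, 0 ≤ Y i) :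
    0 ≤ eval (fun i => (X i : ℂ)) (dirDeriv Y p) / eval (fun i => (X i : ℂ)) p := by
  have hX' : (lineRestrict (fun i => (X i : ℂ)) Y p).eval 0 ≠ 0 := by
    rw [eval_lineRestrict_zero]
    exact hp _ (by simpa using hX)
  rw [eval_dirDeriv, ← eval_lineRestrict_zero _ Y p]
  exact Polynomial.eval_derivative_div_eval_nonneg hX' fun r hr =>
    hp.neg_of_mem_roots_lineRestrict hh hX hY hr

theorem IsHStable.coeff_div_eval_nonneg {p : MvPolynomial σ ℂ} {n : ℕ}
    (hh : p.IsHomogeneous n) (hp : IsHStable p) {X : σ → ℝ} (hX : ∀ i, 0 < X i)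
    (d : σ →₀ ℕ) : 0 ≤ p.coeff d / eval (fun i => (X i : ℂ)) p := by
  classical
  induction n generalizing p d with
  | zero =>
    by_cases hd : p.coeff d = 0
    · simp [hd]
    obtain rfl : d = 0 := (Finsupp.degree_eq_zero_iff d).mp (hh.degree_eq hd)
    rw [totalDegree_eq_zero_iff_eq_C.mp (Nat.le_zero.mp hh.totalDegree_le), eval_C, coeff_zero_C,
      div_self hd]
    exact zero_le_one
  | succ n ih =>
    by_cases hd : p.coeff d = 0
    · simp [hd]
    obtain ⟨i, hi⟩ : ∃ i, d i ≠ 0 := by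
      by_contra! h
      simpa [show d = 0 from Finsupp.ext h] using hh.degree_eq hd
    set d' := d - Finsupp.single i 1
    have hd' : d' + Finsupp.single i 1 = d :=
      tsub_add_cancel_of_le (Finsupp.single_le_iff.mpr (Nat.one_le_iff_ne_zero.mpr hi))
    -- `e_i` is not a positive direction, so differentiate along `e_i + ε` and let `ε → 0`
    have hlim : 0 ≤ (pderiv i p).coeff d' / eval (fun i => (X i : ℂ)) p := by
      refine Complex.nonneg_of_forall_pos_nonneg_add_mul
        (b := (∑ j, (pderiv j p).coeff d') / eval (fun i => (X i : ℂ)) p) fun ε hε => ?_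
      set Y : σ → ℝ := Pi.single i 1 + fun _ => ε
      have hY : ∀ j, 0 < Y j := fun j => by
        simp only [Y, Pi.add_apply, Pi.single_apply]; split_ifs <;> linarith
      have hD := isHStable_dirDeriv hh hp hY
      have key : 0 ≤ (dirDeriv Y p).coeff d' / eval (fun i => (X i : ℂ)) p := by
        rw [← div_mul_div_cancel₀ (hD (fun i => (X i : ℂ)) (by simpa using hX))]
        exact mul_nonneg (ih (hh.dirDeriv Y) hD d')
          (hp.eval_dirDeriv_div_nonneg hh hX fun j => (hY j).le)
      have hcoeff : (dirDeriv Y p).coeff d' =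
          (pderiv i p).coeff d' + ε * ∑ j, (pderiv j p).coeff d' := by
        simp [coeff_dirDeriv, Y, Pi.single_apply, apply_ite, ite_mul, add_mul,
          Finset.sum_add_distrib, Finset.mul_sum]
      rwa [hcoeff, add_div, mul_div_assoc] at key
    rw [coeff_pderiv, hd', mul_div_right_comm] at hlim
    have hpos : (0 : ℂ) < (d' i : ℂ) + 1 := by exact_mod_cast Nat.succ_pos _
    simpa [hpos.ne'] using mul_nonneg hlim (inv_nonneg.mpr hpos.le)

end Fintype

end MvPolynomial

/-- if p is homogeneous H-stable and X > 0 is a real vector, then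
every coefficient of p / p(X) is a nonnegative real number. -/
theorem stmt_9 (m n : ℕ) (p : MvPolynomial (Fin m) ℂ) (hp : p.IsHomogeneous n)
    (hst : ∀ z : Fin m → ℂ, (∀ i, 0 < (z i).re) → MvPolynomial.eval z p ≠ 0)
    (X : Fin m → ℝ) (hX : ∀ i, 0 < X i) :
    ∀ d : Fin m →₀ ℕ,
      0 ≤ (p.coeff d / MvPolynomial.eval (fun i => (X i : ℂ)) p).re ∧
      (p.coeff d / MvPolynomial.eval (fun i => (X i : ℂ)) p).im = 0 := by
  intro d
  obtain ⟨hre, him⟩ :=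
    Complex.nonneg_iff.mp (MvPolynomial.IsHStable.coeff_div_eval_nonneg hp hst hX d)
  exact ⟨hre, him.symm⟩
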